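/- arXiv:2402.16028 — 2 statements merged into one kernel-verified Lean document; each statement's English description precedes it below -/
import Mathlib

section
/- Let a₁, a₂, a₅ > 0 and a₃, a₄ ∈ ℝ with a₃ < a₄·a₅. Define 𝒻(λ) = (a₁λ³ + a₂λ² + a₃λ + a₄)/(a₅λ + 1) and 𝒢(λ) = 2a₁a₅λ³ + (3a₁ + a₂a₅)λ² + 2a₂λ + (a₃ − a₄a₅). Then there exists λ* > 0 with 𝒢(λ*) = 0 such that for all λ ≥ 0, 𝒻(λ*) ≤ 𝒻(λ); that is, 𝒻 attains its minimum over [0, ∞) at λ*. -/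
/-! For a root `s` of `G`, the cross-multiplied difference `f l - f s` factors as
`(l - s)² (a₅ s + 1) (a₁ (l + 2 s) + a₂)` over the product of the denominators, which is
nonnegative on `[0, ∞)`; so every nonnegative root of `G` is a minimiser. A positive root exists by
the intermediate value theorem, since `G 0 = a₃ - a₄ a₅ < 0` and `G` grows at least like `2 a₂ l`. -/

section CubicOverLinear

variable {a1 a2 a3 a4 a5 : ℝ}

theorem cubic_mul_linear_sub_eq (a1 a2 a3 a4 a5 l s : ℝ) :
    (a1 * l ^ 3 + a2 * l ^ 2 + a3 * l + a4) * (a5 * s + 1)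
        - (a1 * s ^ 3 + a2 * s ^ 2 + a3 * s + a4) * (a5 * l + 1)
      = (l - s) * (2 * a1 * a5 * s ^ 3 + (3 * a1 + a2 * a5) * s ^ 2 + 2 * a2 * s + (a3 - a4 * a5))
        + (l - s) ^ 2 * (a5 * s + 1) * (a1 * (l + 2 * s) + a2) := by
  ring

theorem cubic_div_linear_le_of_isCritical (h1 : 0 ≤ a1) (h2 : 0 ≤ a2) (h5 : 0 ≤ a5) {l s : ℝ}
    (hl : 0 ≤ l) (hs : 0 ≤ s)
    (hcrit : 2 * a1 * a5 * s ^ 3 + (3 * a1 + a2 * a5) * s ^ 2 + 2 * a2 * s + (a3 - a4 * a5) = 0) :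
    (a1 * s ^ 3 + a2 * s ^ 2 + a3 * s + a4) / (a5 * s + 1)
      ≤ (a1 * l ^ 3 + a2 * l ^ 2 + a3 * l + a4) / (a5 * l + 1) := by
  rw [div_le_div_iff₀ (by positivity) (by positivity), ← sub_nonneg, cubic_mul_linear_sub_eq,
    hcrit, mul_zero, zero_add]
  positivity

theorem exists_pos_cubic_eq_zero (h1 : 0 ≤ a1) (h2 : 0 < a2) (h5 : 0 ≤ a5) (h34 : a3 < a4 * a5) :
    ∃ s : ℝ, 0 < s ∧
      2 * a1 * a5 * s ^ 3 + (3 * a1 + a2 * a5) * s ^ 2 + 2 * a2 * s + (a3 - a4 * a5) = 0 := by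
  set G : ℝ → ℝ := fun s =>
    2 * a1 * a5 * s ^ 3 + (3 * a1 + a2 * a5) * s ^ 2 + 2 * a2 * s + (a3 - a4 * a5)
  set b := (a4 * a5 - a3) / a2
  have hb : 0 < b := div_pos (sub_pos.2 h34) h2
  have hG0 : G 0 < 0 := by simp only [G]; linarith
  have hGb : 0 < G b := by
    have h2b : 2 * a2 * b = 2 * (a4 * a5 - a3) := by
      simp only [b]; field_simp
    have hcubic : 0 ≤ 2 * a1 * a5 * b ^ 3 + (3 * a1 + a2 * a5) * b ^ 2 := by positivity
    simp only [G]; linarith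
  obtain ⟨s, hs, hGs⟩ :=
    intermediate_value_Ioo hb.le (by fun_prop : Continuous G).continuousOn ⟨hG0, hGb⟩
  exact ⟨s, hs.1, hGs⟩

end CubicOverLinear

theorem stmt_3 (a1 a2 a3 a4 a5 : ℝ) (h1 : 0 < a1) (h2 : 0 < a2) (h5 : 0 < a5)
    (h34 : a3 < a4 * a5) (f G : ℝ → ℝ)
    (hf : ∀ l : ℝ, f l = (a1 * l ^ 3 + a2 * l ^ 2 + a3 * l + a4) / (a5 * l + 1))
    (hG : ∀ l : ℝ, G l =
      2 * a1 * a5 * l ^ 3 + (3 * a1 + a2 * a5) * l ^ 2 + 2 * a2 * l + (a3 - a4 * a5)) :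
    ∃ lstar : ℝ, 0 < lstar ∧ G lstar = 0 ∧ ∀ l : ℝ, 0 ≤ l → f lstar ≤ f l := by
  obtain ⟨s, hs, hcrit⟩ := exists_pos_cubic_eq_zero h1.le h2 h5.le h34
  refine ⟨s, hs, (hG s).trans hcrit, fun l hl => ?_⟩
  rw [hf, hf]
  exact cubic_div_linear_le_of_isCritical h1.le h2.le h5.le hl hs.le hcrit
end

section
/- Let σ > 0, q ∈ [0, 1], and let α be a natural number with α ≥ 1. Let φ₀ and φ₁ denote the probability density functions of the normal distributions N(0, σ²) and N(1, σ²) on ℝ. Then ∫ ((1 − q)·φ₀(x) + q·φ₁(x))^α · φ₀(x)^(1 − α) dx = Σ_{k=0}^{α} (α choose k)·(1 − q)^(α − k)·q^k·exp((k² − k)/(2σ²)). -/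
open MeasureTheory ProbabilityTheory Real

private lemma quad_eq' (b c : ℝ) (hb : 0 < b) (x : ℝ) :
    -b * x ^ 2 + c * x = -b * (x - c / (2 * b)) ^ 2 + c ^ 2 / (4 * b) := by
  field_simp
  ring

private lemma integrable_exp_quad' (b c : ℝ) (hb : 0 < b) :
    Integrable (fun x : ℝ => Real.exp (-b * x ^ 2 + c * x)) := by
  have h : (fun x : ℝ => Real.exp (-b * x ^ 2 + c * x))
      = fun x => Real.exp (c ^ 2 / (4 * b)) * Real.exp (-b * (x - c / (2 * b)) ^ 2) := by
    funext x
    rw [← Real.exp_add, quad_eq' b c hb x]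
    ring_nf
  rw [h]
  exact ((integrable_exp_neg_mul_sq hb).comp_sub_right (c / (2 * b))).const_mul _

private lemma integral_exp_quad' (b c : ℝ) (hb : 0 < b) :
    ∫ x : ℝ, Real.exp (-b * x ^ 2 + c * x)
      = Real.sqrt (π / b) * Real.exp (c ^ 2 / (4 * b)) := by
  have h : ∀ x : ℝ, Real.exp (-b * x ^ 2 + c * x)
      = Real.exp (-b * (x - c / (2 * b)) ^ 2) * Real.exp (c ^ 2 / (4 * b)) := by
    intro x
    rw [← Real.exp_add, quad_eq' b c hb x]
  simp_rw [h]
  rw [integral_mul_const, integral_sub_right_eq_self (fun x => Real.exp (-b * x ^ 2)) (c / (2 * b)),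
    integral_gaussian]

private lemma gfun_eq' (σ : ℝ) (hσ : 0 < σ) (k : ℕ) :
    (fun x : ℝ => Real.exp ((k : ℝ) * (2 * x - 1) / (2 * σ ^ 2))
        * gaussianPDFReal 0 (Real.toNNReal (σ ^ 2)) x)
      = fun x => ((Real.sqrt (2 * π * σ ^ 2))⁻¹ * Real.exp (-(k : ℝ) / (2 * σ ^ 2)))
          * Real.exp (-(1 / (2 * σ ^ 2)) * x ^ 2 + ((k : ℝ) / σ ^ 2) * x) := by
  have hv : ((Real.toNNReal (σ ^ 2)) : ℝ) = σ ^ 2 := Real.coe_toNNReal _ (sq_nonneg σ)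
  funext x
  simp only [gaussianPDFReal, hv, sub_zero]
  rw [mul_comm, mul_assoc, ← Real.exp_add]
  conv_rhs => rw [mul_assoc, ← Real.exp_add]
  have hσ2 : σ ^ 2 ≠ 0 := by positivity
  congr 1
  field_simp
  ring

private lemma term_integrable' (σ : ℝ) (hσ : 0 < σ) (k : ℕ) :
    Integrable (fun x : ℝ => Real.exp ((k : ℝ) * (2 * x - 1) / (2 * σ ^ 2))
        * gaussianPDFReal 0 (Real.toNNReal (σ ^ 2)) x) := by
  rw [gfun_eq' σ hσ k]
  exact (integrable_exp_quad' _ _ (by positivity)).const_mul _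

private lemma term_integral' (σ : ℝ) (hσ : 0 < σ) (k : ℕ) :
    ∫ x : ℝ, Real.exp ((k : ℝ) * (2 * x - 1) / (2 * σ ^ 2))
        * gaussianPDFReal 0 (Real.toNNReal (σ ^ 2)) x
      = Real.exp (((k : ℝ) ^ 2 - (k : ℝ)) / (2 * σ ^ 2)) := by
  rw [gfun_eq' σ hσ k]
  rw [integral_const_mul, integral_exp_quad' _ _ (by positivity)]
  have hσ2 : (0 : ℝ) < σ ^ 2 := by positivity
  have h1 : π / (1 / (2 * σ ^ 2)) = 2 * π * σ ^ 2 := by field_simp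
  have h2 : ((k : ℝ) / σ ^ 2) ^ 2 / (4 * (1 / (2 * σ ^ 2))) = (k : ℝ) ^ 2 / (2 * σ ^ 2) := by
    field_simp; ring
  rw [h1, h2]
  have hs : Real.sqrt (2 * π * σ ^ 2) ≠ 0 := by positivity
  rw [show (Real.sqrt (2 * π * σ ^ 2))⁻¹ * Real.exp (-(k : ℝ) / (2 * σ ^ 2))
        * (Real.sqrt (2 * π * σ ^ 2) * Real.exp ((k : ℝ) ^ 2 / (2 * σ ^ 2)))
      = ((Real.sqrt (2 * π * σ ^ 2))⁻¹ * Real.sqrt (2 * π * σ ^ 2))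
        * (Real.exp (-(k : ℝ) / (2 * σ ^ 2)) * Real.exp ((k : ℝ) ^ 2 / (2 * σ ^ 2))) by ring]
  rw [inv_mul_cancel₀ hs, one_mul, ← Real.exp_add]
  congr 1
  ring

private lemma pointwise_eq' (σ : ℝ) (hσ : 0 < σ) (q : ℝ) (α : ℕ) (x : ℝ) :
    ((1 - q) * gaussianPDFReal 0 (Real.toNNReal (σ ^ 2)) x
        + q * gaussianPDFReal 1 (Real.toNNReal (σ ^ 2)) x) ^ α
      * gaussianPDFReal 0 (Real.toNNReal (σ ^ 2)) x ^ ((1 : ℤ) - (α : ℤ))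
    = ∑ k ∈ Finset.range (α + 1),
        (α.choose k : ℝ) * (1 - q) ^ (α - k) * q ^ k
          * (Real.exp ((k : ℝ) * (2 * x - 1) / (2 * σ ^ 2))
              * gaussianPDFReal 0 (Real.toNNReal (σ ^ 2)) x) := by
  have hv : ((Real.toNNReal (σ ^ 2)) : ℝ) = σ ^ 2 := Real.coe_toNNReal _ (sq_nonneg σ)
  have hVne : Real.toNNReal (σ ^ 2) ≠ 0 := by
    simp only [ne_eq, Real.toNNReal_eq_zero, not_le]
    positivity
  set φ := gaussianPDFReal 0 (Real.toNNReal (σ ^ 2)) x with hφ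
  have h0 : 0 < φ := gaussianPDFReal_pos 0 _ x hVne
  have hr : gaussianPDFReal 1 (Real.toNNReal (σ ^ 2)) x
      = Real.exp ((2 * x - 1) / (2 * σ ^ 2)) * φ := by
    rw [hφ]
    simp only [gaussianPDFReal, hv, sub_zero]
    rw [show Real.exp ((2 * x - 1) / (2 * σ ^ 2))
          * ((Real.sqrt (2 * π * σ ^ 2))⁻¹ * Real.exp (-x ^ 2 / (2 * σ ^ 2)))
        = (Real.sqrt (2 * π * σ ^ 2))⁻¹
          * Real.exp ((2 * x - 1) / (2 * σ ^ 2) + -x ^ 2 / (2 * σ ^ 2)) by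
      rw [Real.exp_add]; ring]
    congr 1
    ring
  rw [zpow_sub₀ h0.ne', zpow_one, zpow_natCast, hr]
  set e := Real.exp ((2 * x - 1) / (2 * σ ^ 2)) with he
  have hstep : ((1 - q) * φ + q * (e * φ)) ^ α * (φ / φ ^ α)
      = (q * e + (1 - q)) ^ α * φ := by
    have : (1 - q) * φ + q * (e * φ) = (q * e + (1 - q)) * φ := by ring
    rw [this, mul_pow]
    field_simp
  rw [hstep, add_pow, Finset.sum_mul]
  refine Finset.sum_congr rfl fun k _ => ?_
  rw [mul_pow, ← Real.exp_nat_mul, mul_div_assoc]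
  ring

theorem stmt_15 (σ : ℝ) (hσ : 0 < σ) (q : ℝ) (hq0 : 0 ≤ q) (hq1 : q ≤ 1)
    (α : ℕ) (hα : 1 ≤ α) :
    ∫ x : ℝ,
        ((1 - q) * gaussianPDFReal 0 (Real.toNNReal (σ ^ 2)) x
            + q * gaussianPDFReal 1 (Real.toNNReal (σ ^ 2)) x) ^ α
          * gaussianPDFReal 0 (Real.toNNReal (σ ^ 2)) x ^ ((1 : ℤ) - (α : ℤ))
      = ∑ k ∈ Finset.range (α + 1),
          (α.choose k : ℝ) * (1 - q) ^ (α - k) * q ^ k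
            * Real.exp (((k : ℝ) ^ 2 - (k : ℝ)) / (2 * σ ^ 2)) := by
  simp_rw [pointwise_eq' σ hσ q α]
  rw [integral_finset_sum _ fun k _ => ((term_integrable' σ hσ k).const_mul _)]
  refine Finset.sum_congr rfl fun k _ => ?_
  rw [integral_const_mul, term_integral' σ hσ k]
end
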